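/- arXiv:1306.5645 — 3 statements merged into one kernel-verified Lean document; each statement's English description precedes it below -/
import Mathlib

section
/- Let G be a bridgeless cubic graph, let ω(G) denote its oddness (the minimum number of odd circuits in a 2-factor of G), and let μ₂(G) be the minimum of |M₁ ∩ M₂| over all pairs of 1-factors M₁, M₂ of G. Then ω(G) ≤ 2·μ₂(G). -/
open SimpleGraph

/-- The edge cut `∂_G(S)`: edges of `G` with exactly one end in `S`. -/
def edgeCut {V : Type*} (G : SimpleGraph V) (S : Set V) : Set (Sym2 V) :=
  {e | e ∈ G.edgeSet ∧ ∃ x ∈ S, ∃ y ∉ S, e = s(x, y)}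

/-- `G` is cubic (3-regular). -/
def IsCubic {V : Type*} (G : SimpleGraph V) : Prop :=
  ∀ v, (G.neighborSet v).ncard = 3

/-- `G` is bridgeless: no edge is a bridge. -/
def Bridgeless {V : Type*} (G : SimpleGraph V) : Prop :=
  ∀ e ∈ G.edgeSet, ¬ G.IsBridge e

/-- `μ₂(G)`: the minimum size of the intersection of two 1-factors of `G`. -/
noncomputable def mu2 {V : Type*} [Fintype V] (G : SimpleGraph V) : ℕ :=
  sInf {n | ∃ M₁ M₂ : G.Subgraph, M₁.IsPerfectMatching ∧ M₂.IsPerfectMatching ∧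
    (M₁.edgeSet ∩ M₂.edgeSet).ncard = n}

/-- The oddness `ω(G)`: the minimum number of odd components (odd circuits)
in a 2-factor of `G`. -/
noncomputable def oddness {V : Type*} [Fintype V] (G : SimpleGraph V) : ℕ :=
  sInf {n | ∃ H : G.Subgraph, H.IsSpanning ∧ (∀ v, (H.neighborSet v).ncard = 2) ∧
    Nat.card {C : H.coe.ConnectedComponent // Odd (Nat.card C.supp)} = n}


/-! Take 1-factors `M₁`, `M₂` with `|M₁ ∩ M₂| = μ₂(G)` and let `F` be the 2-factor complementary
to `M₁`. The perfect matching `M₂` has an edge leaving each odd circuit of `F`; this edge is not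
in `F`, so it lies in `M₁ ∩ M₂`. Distinct odd circuits thus receive distinct endpoints of edges of
`M₁ ∩ M₂`, of which there are at most `2 μ₂(G)`. -/

namespace SimpleGraph

variable {V : Type*} {G : SimpleGraph V}

namespace Subgraph

lemma isPerfectMatching_iff_forall_ncard_neighborSet {M : G.Subgraph} :
    M.IsPerfectMatching ↔ ∀ v, (M.neighborSet v).ncard = 1 := by
  simp only [isPerfectMatching_iff, Set.ncard_eq_one, Set.eq_singleton_iff_unique_mem,
    mem_neighborSet, ExistsUnique]

lemma IsPerfectMatching.exists_adj_of_odd_ncard {M : G.Subgraph} (hM : M.IsPerfectMatching)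
    {S : Set V} (hS : Odd S.ncard) : ∃ v ∈ S, ∃ w ∉ S, M.Adj v w := by
  by_contra! hclosed
  have hmatch : (M.induce S).IsMatching := fun v hv => by
    obtain ⟨w, hvw, huniq⟩ := hM.1 (hM.2 v)
    have hw : w ∈ S := by_contra fun hw => hclosed v hv w hw hvw
    exact ⟨w, ⟨hv, hw, hvw⟩, fun y hy => huniq y hy.2.2⟩
  have : Fintype (M.induce S).verts := (Set.finite_of_ncard_pos hS.pos).fintype
  have heven := hmatch.even_card
  rw [← Set.ncard_eq_toFinset_card'] at heven
  exact Nat.not_even_iff_odd.2 hS heven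

lemma exists_adj_not_adj_of_odd_card_supp {H M : G.Subgraph} (hH : H.IsSpanning)
    (hM : M.IsPerfectMatching) {C : H.coe.ConnectedComponent} (hC : Odd (Nat.card C.supp)) :
    ∃ v ∈ C.supp, ∃ w, M.Adj v w ∧ ¬H.Adj v w := by
  have hodd : Odd (Subtype.val '' C.supp).ncard := by
    rwa [Set.ncard_image_of_injective _ Subtype.val_injective, ← Nat.card_coe_set_eq]
  obtain ⟨_, ⟨v, hvC, rfl⟩, w, hwC, hvw⟩ := hM.exists_adj_of_odd_ncard hodd
  exact ⟨v, hvC, w, hvw, fun hH' =>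
    hwC (ConnectedComponent.mem_coe_supp_of_adj ⟨v, hvC, rfl⟩ (hH w) hH')⟩

def spanningCompl (H : G.Subgraph) : G.Subgraph :=
  G.toSubgraph (G \ H.spanningCoe) sdiff_le

@[simp]
lemma spanningCompl_adj {H : G.Subgraph} {v w : V} :
    H.spanningCompl.Adj v w ↔ G.Adj v w ∧ ¬H.Adj v w :=
  Iff.rfl

lemma spanningCompl_isSpanning (H : G.Subgraph) : H.spanningCompl.IsSpanning :=
  toSubgraph.isSpanning _ _

lemma neighborSet_spanningCompl (H : G.Subgraph) (v : V) :
    H.spanningCompl.neighborSet v = G.neighborSet v \ H.neighborSet v := by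
  ext w
  simp

-- The edge of `M₁ ∩ M₂` leaving an odd component, oriented out of it, is a dart of `M₁ ⊓ M₂`
-- whose tail determines the component.
lemma card_odd_connectedComponent_spanningCompl_le [Fintype V] {M₁ M₂ : G.Subgraph}
    (hM₂ : M₂.IsPerfectMatching) :
    Nat.card {C : M₁.spanningCompl.coe.ConnectedComponent // Odd (Nat.card C.supp)} ≤
      2 * (M₁.edgeSet ∩ M₂.edgeSet).ncard := by
  classical
  have hdart : ∀ C : {C : M₁.spanningCompl.coe.ConnectedComponent // Odd (Nat.card C.supp)},
      ∃ d : (M₁ ⊓ M₂).spanningCoe.Dart, ⟨d.fst, Set.mem_univ _⟩ ∈ C.1.supp := by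
    rintro ⟨C, hC⟩
    obtain ⟨v, hvC, w, hvw, hnot⟩ :=
      exists_adj_not_adj_of_odd_card_supp (spanningCompl_isSpanning M₁) hM₂ hC
    have hM₁vw : M₁.Adj v w := by
      simpa [M₂.adj_sub hvw] using hnot
    exact ⟨⟨(v, w), hM₁vw, hvw⟩, hvC⟩
  choose f hf using hdart
  have hf_inj : Function.Injective f := fun C C' h => Subtype.ext <| by
    rw [← (ConnectedComponent.mem_supp_iff _ _).1 (hf C),
      ← (ConnectedComponent.mem_supp_iff _ _).1 (hf C'), h]
  calc _ ≤ Nat.card (M₁ ⊓ M₂).spanningCoe.Dart := Nat.card_le_card_of_injective f hf_inj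
    _ = 2 * (M₁ ⊓ M₂).spanningCoe.edgeFinset.card := by
      rw [Nat.card_eq_fintype_card, dart_card_eq_twice_card_edges]
    _ = 2 * (M₁.edgeSet ∩ M₂.edgeSet).ncard := by
      rw [← Set.ncard_coe_finset, coe_edgeFinset, edgeSet_spanningCoe, edgeSet_inf]

end Subgraph

end SimpleGraph

namespace IsCubic

open SimpleGraph Subgraph

variable {V : Type*} {G : SimpleGraph V}

lemma ncard_neighborSet_spanningCompl (hG : IsCubic G) (H : G.Subgraph) (v : V) :
    (H.spanningCompl.neighborSet v).ncard = 3 - (H.neighborSet v).ncard := by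
  have hsub : H.neighborSet v ⊆ G.neighborSet v := fun _ => H.adj_sub
  have hfin : (G.neighborSet v).Finite := Set.finite_of_ncard_ne_zero (by simp [hG v])
  rw [neighborSet_spanningCompl, Set.ncard_sdiff hsub (hfin.subset hsub), hG v]

lemma ncard_neighborSet_spanningCompl_of_isPerfectMatching (hG : IsCubic G) {M : G.Subgraph}
    (hM : M.IsPerfectMatching) (v : V) : (M.spanningCompl.neighborSet v).ncard = 2 := by
  rw [hG.ncard_neighborSet_spanningCompl, isPerfectMatching_iff_forall_ncard_neighborSet.1 hM v]

lemma isPerfectMatching_spanningCompl (hG : IsCubic G) {H : G.Subgraph}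
    (hH : ∀ v, (H.neighborSet v).ncard = 2) : H.spanningCompl.IsPerfectMatching :=
  isPerfectMatching_iff_forall_ncard_neighborSet.2 fun v => by
    rw [hG.ncard_neighborSet_spanningCompl, hH v]

end IsCubic

theorem stmt0_general {V : Type*} [Fintype V] (G : SimpleGraph V)
    (hcubic : IsCubic G) :
    oddness G ≤ 2 * mu2 G := by
  rcases Set.eq_empty_or_nonempty {n | ∃ H : G.Subgraph, H.IsSpanning ∧
      (∀ v, (H.neighborSet v).ncard = 2) ∧
      Nat.card {C : H.coe.ConnectedComponent // Odd (Nat.card C.supp)} = n} with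
    hnone | ⟨_, H, -, hH, -⟩
  · -- no 2-factor: `oddness G = sInf ∅ = 0`
    rw [oddness, hnone, Nat.sInf_empty]
    exact Nat.zero_le _
  have hM := hcubic.isPerfectMatching_spanningCompl hH
  obtain ⟨M₁, M₂, hM₁, hM₂, hmin⟩ := Nat.sInf_mem (⟨_, _, _, hM, hM, rfl⟩ :
    {n | ∃ M₁ M₂ : G.Subgraph, M₁.IsPerfectMatching ∧ M₂.IsPerfectMatching ∧
      (M₁.edgeSet ∩ M₂.edgeSet).ncard = n}.Nonempty)
  calc oddness G
      ≤ Nat.card {C : M₁.spanningCompl.coe.ConnectedComponent // Odd (Nat.card C.supp)} :=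
        Nat.sInf_le ⟨_, M₁.spanningCompl_isSpanning,
          hcubic.ncard_neighborSet_spanningCompl_of_isPerfectMatching hM₁, rfl⟩
    _ ≤ 2 * (M₁.edgeSet ∩ M₂.edgeSet).ncard :=
        Subgraph.card_odd_connectedComponent_spanningCompl_le hM₂
    _ = 2 * mu2 G := by rw [hmin, mu2]

theorem stmt0 {V : Type*} [Fintype V] (G : SimpleGraph V)
    (hcubic : IsCubic G) (hbridgeless : Bridgeless G) :
    oddness G ≤ 2 * mu2 G :=
  stmt0_general G hcubic
end

section
/- Let (D₁, φ₁) and (D₂, φ₂) be a k₁-flow and a k₂-flow on a graph G (allowing value 0). Define their sum (D, φ) by: an edge e gets orientation D₁(e) if φ₁(e) ≥ φ₂(e) and D₂(e) otherwise, and φ(e) = φ₁(e) + φ₂(e) if e has the same direction in D₁ and D₂, and φ(e) = |φ₁(e) − φ₂(e)| otherwise. Then (D, φ) is a (k₁ + k₂ − 1)-flow on G, i.e., it satisfies Kirchhoff's law at every vertex with values in {0,…,k₁+k₂−2}. -/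
open SimpleGraph Finset

/-- A flow on `G`, modeled as a signed (antisymmetric) integer function on ordered
pairs of vertices, supported on the edges of `G`, satisfying Kirchhoff's law at
every vertex. -/
def IsFlow {V : Type*} [Fintype V] (G : SimpleGraph V) (φ : V → V → ℤ) : Prop :=
  (∀ x y, φ x y = - φ y x) ∧ (∀ x y, ¬ G.Adj x y → φ x y = 0) ∧
    (∀ x, ∑ y, φ x y = 0)

/-- A `k`-flow on `G` (value `0` allowed): a flow with all edge values of absolute
value at most `k - 1`. -/
def IsKFlow {V : Type*} [Fintype V] (G : SimpleGraph V) (k : ℕ)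
    (φ : V → V → ℤ) : Prop :=
  IsFlow G φ ∧ ∀ x y, (φ x y).natAbs ≤ k - 1

/-- The sum of a `k₁`-flow and a `k₂`-flow on `G` (modeled as pointwise addition of
the associated signed integer flows, which realizes the orientation/absolute-difference
rule for the sum of flows) is a `(k₁ + k₂ - 1)`-flow on `G`. -/
theorem stmt11 {V : Type*} [Fintype V] (G : SimpleGraph V) (k₁ k₂ : ℕ)
    (hk₁ : 1 ≤ k₁) (hk₂ : 1 ≤ k₂) (φ₁ φ₂ : V → V → ℤ)
    (h₁ : IsKFlow G k₁ φ₁) (h₂ : IsKFlow G k₂ φ₂) :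
    IsKFlow G (k₁ + k₂ - 1) (fun x y => φ₁ x y + φ₂ x y) := by
  obtain ⟨⟨a₁, s₁, c₁⟩, b₁⟩ := h₁
  obtain ⟨⟨a₂, s₂, c₂⟩, b₂⟩ := h₂
  refine ⟨⟨fun x y => by simp only []; rw [a₁ x y, a₂ x y]; ring,
    fun x y h => by show φ₁ x y + φ₂ x y = 0; rw [s₁ x y h, s₂ x y h]; ring,
    fun x => by simp [Finset.sum_add_distrib, c₁ x, c₂ x]⟩, fun x y => ?_⟩
  simp only [] at *
  have h1 := b₁ x y
  have h2 := b₂ x y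
  have : (φ₁ x y + φ₂ x y).natAbs ≤ (φ₁ x y).natAbs + (φ₂ x y).natAbs :=
    Int.natAbs_add_le _ _
  omega
end

section
/- Let G be a cubic graph with a proper 3-edge-coloring c, and let φ be the canonical nowhere-zero 4-flow built from c (value 1 on c⁻¹(1), value 1 or 3 on c⁻¹(2), value 2 on c⁻¹(3)), with orientation D. Partition V(G) into A = {v : d⁺_D(v) = 2} and B = {v : d⁺_D(v) = 1}. Then for every edge e = xy with c(e) ∈ {1,2}, exactly one endpoint of e lies in A and the other lies in B. -/
open SimpleGraph Finset

lemma triple_aux {V : Type*} [Fintype V] (G : SimpleGraph V)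
    (hcubic : IsCubic G) (c : V → V → Fin 3)
    (hproper : ∀ x y z, G.Adj x y → G.Adj x z → y ≠ z → c x y ≠ c x z) (x : V) :
    ∃ a b d, a ≠ b ∧ a ≠ d ∧ b ≠ d ∧ (∀ z, G.Adj x z ↔ z = a ∨ z = b ∨ z = d) ∧
      c x a = 0 ∧ c x b = 1 ∧ c x d = 2 := by
  obtain ⟨p, q, r, hpq, hpr, hqr, hset⟩ := Set.ncard_eq_three.mp (hcubic x)
  have hmem : ∀ z, G.Adj x z ↔ z = p ∨ z = q ∨ z = r := by
    intro z
    have : z ∈ G.neighborSet x ↔ z ∈ ({p, q, r} : Set V) := by rw [hset]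
    simpa using this
  have hp' : G.Adj x p := (hmem p).2 (Or.inl rfl)
  have hq' : G.Adj x q := (hmem q).2 (Or.inr (Or.inl rfl))
  have hr' : G.Adj x r := (hmem r).2 (Or.inr (Or.inr rfl))
  have cpq := hproper x p q hp' hq' hpq
  have cpr := hproper x p r hp' hr' hpr
  have cqr := hproper x q r hq' hr' hqr
  have fin3 : ∀ t : Fin 3, t = 0 ∨ t = 1 ∨ t = 2 := by decide
  rcases fin3 (c x p) with hp | hp | hp <;>
    rcases fin3 (c x q) with hq | hq | hq <;>
      rcases fin3 (c x r) with hr | hr | hr <;>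
  first
  | exact absurd (hp.trans hq.symm) cpq
  | exact absurd (hp.trans hr.symm) cpr
  | exact absurd (hq.trans hr.symm) cqr
  | exact ⟨p, q, r, hpq, hpr, hqr, hmem, hp, hq, hr⟩
  | exact ⟨p, r, q, hpr, hpq, hqr.symm, fun z => (hmem z).trans (by tauto), hp, hr, hq⟩
  | exact ⟨q, p, r, hpq.symm, hqr, hpr, fun z => (hmem z).trans (by tauto), hq, hp, hr⟩
  | exact ⟨q, r, p, hqr, hpq.symm, hpr.symm, fun z => (hmem z).trans (by tauto), hq, hr, hp⟩
  | exact ⟨r, p, q, hpr.symm, hqr.symm, hpq, fun z => (hmem z).trans (by tauto), hr, hp, hq⟩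
  | exact ⟨r, q, p, hqr.symm, hpr.symm, hpq.symm, fun z => (hmem z).trans (by tauto), hr, hq, hp⟩

lemma key_aux {V : Type*} [Fintype V] (G : SimpleGraph V) (φ : V → V → ℤ)
    (hflow : IsFlow G φ) (x a b d : V)
    (hab : a ≠ b) (had : a ≠ d) (hbd : b ≠ d)
    (hmem : ∀ z, G.Adj x z ↔ z = a ∨ z = b ∨ z = d)
    (ha : φ x a = 1 ∨ φ x a = -1)
    (hb : φ x b = 1 ∨ φ x b = -1 ∨ φ x b = 3 ∨ φ x b = -3)
    (hd : φ x d = 2 ∨ φ x d = -2) :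
    ({z | 0 < φ x z}.ncard = 2 ∧ 0 < φ x a ∧ (φ x b = 1 ∨ φ x b = -3)) ∨
    ({z | 0 < φ x z}.ncard = 1 ∧ φ x a < 0 ∧ (φ x b = -1 ∨ φ x b = 3)) := by
  classical
  have hzero : ∀ z, z ≠ a → z ≠ b → z ≠ d → φ x z = 0 := by
    intro z h1 h2 h3
    exact hflow.2.1 _ _ (by rw [hmem]; tauto)
  have hsum : φ x a + φ x b + φ x d = 0 := by
    have h0 := hflow.2.2 x
    have h1 : ∑ y, φ x y = ∑ y ∈ ({a, b, d} : Finset V), φ x y := by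
      symm
      apply Finset.sum_subset (Finset.subset_univ _)
      intro z _ hz
      simp only [Finset.mem_insert, Finset.mem_singleton] at hz
      push_neg at hz
      exact hzero z hz.1 hz.2.1 hz.2.2
    rw [h1] at h0
    rw [Finset.sum_insert (by simp [hab, had]),
      Finset.sum_insert (by simp [hbd]), Finset.sum_singleton] at h0
    omega
  have hposmem : ∀ z, 0 < φ x z → z = a ∨ z = b ∨ z = d := by
    intro z hz
    by_contra h
    push_neg at h
    rw [hzero z h.1 h.2.1 h.2.2] at hz
    omega
  rcases ha with ha | ha <;> rcases hd with hd | hd <;>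
    rcases hb with hb | hb | hb | hb <;> try omega
  · -- φ x a = 1, φ x b = -3, φ x d = 2 : out-set = {a, d}
    left
    refine ⟨?_, by omega, by omega⟩
    have hset : {z | 0 < φ x z} = {a, d} := by
      ext z
      simp only [Set.mem_setOf_eq, Set.mem_insert_iff, Set.mem_singleton_iff]
      constructor
      · intro hz
        rcases hposmem z hz with rfl | rfl | rfl
        · exact Or.inl rfl
        · omega
        · exact Or.inr rfl
      · rintro (rfl | rfl) <;> omega
    rw [hset]
    exact Set.ncard_pair had
  · -- φ x a = 1, φ x b = 1, φ x d = -2 : out-set = {a, b}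
    left
    refine ⟨?_, by omega, by omega⟩
    have hset : {z | 0 < φ x z} = {a, b} := by
      ext z
      simp only [Set.mem_setOf_eq, Set.mem_insert_iff, Set.mem_singleton_iff]
      constructor
      · intro hz
        rcases hposmem z hz with rfl | rfl | rfl
        · exact Or.inl rfl
        · exact Or.inr rfl
        · omega
      · rintro (rfl | rfl) <;> omega
    rw [hset]
    exact Set.ncard_pair hab
  · -- φ x a = -1, φ x b = -1, φ x d = 2 : out-set = {d}
    right
    refine ⟨?_, by omega, by omega⟩
    have hset : {z | 0 < φ x z} = {d} := by
      ext z
      simp only [Set.mem_setOf_eq, Set.mem_singleton_iff]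
      constructor
      · intro hz
        rcases hposmem z hz with rfl | rfl | rfl
        · omega
        · omega
        · rfl
      · rintro rfl; omega
    rw [hset]
    exact Set.ncard_singleton d
  · -- φ x a = -1, φ x b = 3, φ x d = -2 : out-set = {b}
    right
    refine ⟨?_, by omega, by omega⟩
    have hset : {z | 0 < φ x z} = {b} := by
      ext z
      simp only [Set.mem_setOf_eq, Set.mem_singleton_iff]
      constructor
      · intro hz
        rcases hposmem z hz with rfl | rfl | rfl
        · omega
        · rfl
        · omega
      · rintro rfl; omega
    rw [hset]
    exact Set.ncard_singleton b

lemma vertex_aux {V : Type*} [Fintype V] (G : SimpleGraph V)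
    (hcubic : IsCubic G) (c : V → V → Fin 3)
    (hproper : ∀ x y z, G.Adj x y → G.Adj x z → y ≠ z → c x y ≠ c x z)
    (φ : V → V → ℤ) (hflow : IsFlow G φ)
    (hval : ∀ x y, G.Adj x y →
      (c x y = 0 → (φ x y).natAbs = 1) ∧
      (c x y = 1 → (φ x y).natAbs = 1 ∨ (φ x y).natAbs = 3) ∧
      (c x y = 2 → (φ x y).natAbs = 2)) (x : V) :
    ∃ a b d, (∀ z, G.Adj x z ↔ z = a ∨ z = b ∨ z = d) ∧
      c x a = 0 ∧ c x b = 1 ∧ c x d = 2 ∧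
      (({z | 0 < φ x z}.ncard = 2 ∧ 0 < φ x a ∧ (φ x b = 1 ∨ φ x b = -3)) ∨
       ({z | 0 < φ x z}.ncard = 1 ∧ φ x a < 0 ∧ (φ x b = -1 ∨ φ x b = 3))) := by
  obtain ⟨a, b, d, hab, had, hbd, hmem, ha0, hb1, hd2⟩ :=
    triple_aux G hcubic c hproper x
  have haAdj : G.Adj x a := (hmem a).2 (Or.inl rfl)
  have hbAdj : G.Adj x b := (hmem b).2 (Or.inr (Or.inl rfl))
  have hdAdj : G.Adj x d := (hmem d).2 (Or.inr (Or.inr rfl))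
  have ha : φ x a = 1 ∨ φ x a = -1 := by
    have := (hval x a haAdj).1 ha0; omega
  have hb : φ x b = 1 ∨ φ x b = -1 ∨ φ x b = 3 ∨ φ x b = -3 := by
    have := (hval x b hbAdj).2.1 hb1; omega
  have hd : φ x d = 2 ∨ φ x d = -2 := by
    have := (hval x d hdAdj).2.2 hd2; omega
  exact ⟨a, b, d, hmem, ha0, hb1, hd2,
    key_aux G φ hflow x a b d hab had hbd hmem ha hb hd⟩

/-- Let `G` be a cubic graph with a proper 3-edge-coloring `c` (colors `0,1,2`
playing the roles of `1,2,3`) and let `φ` be the canonical nowhere-zero 4-flow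
built from `c`: absolute value `1` on color `0`, `1` or `3` on color `1`, and `2`
on color `2`. Partition the vertices into `A = {v : d⁺(v) = 2}` and
`B = {v : d⁺(v) = 1}` (with respect to the orientation induced by `φ`). Then for
every edge `xy` of color `0` or `1`, exactly one endpoint lies in `A` and the other
lies in `B`. -/
theorem stmt17 {V : Type*} [Fintype V] (G : SimpleGraph V)
    (hcubic : IsCubic G)
    (c : V → V → Fin 3) (hsym : ∀ x y, c x y = c y x)
    (hproper : ∀ x y z, G.Adj x y → G.Adj x z → y ≠ z → c x y ≠ c x z)
    (φ : V → V → ℤ) (hflow : IsFlow G φ)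
    (hval : ∀ x y, G.Adj x y →
      (c x y = 0 → (φ x y).natAbs = 1) ∧
      (c x y = 1 → (φ x y).natAbs = 1 ∨ (φ x y).natAbs = 3) ∧
      (c x y = 2 → (φ x y).natAbs = 2)) :
    ∀ x y, G.Adj x y → (c x y = 0 ∨ c x y = 1) →
      ({z | 0 < φ x z}.ncard = 2 ∧ {z | 0 < φ y z}.ncard = 1) ∨
      ({z | 0 < φ x z}.ncard = 1 ∧ {z | 0 < φ y z}.ncard = 2) := by
  intro x y hxy hcol
  obtain ⟨a, b, d, hmx, ha0, hb1, hd2, hx⟩ :=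
    vertex_aux G hcubic c hproper φ hflow hval x
  obtain ⟨a', b', d', hmy, ha0', hb1', hd2', hy⟩ :=
    vertex_aux G hcubic c hproper φ hflow hval y
  have hanti : φ x y = - φ y x := hflow.1 x y
  rcases hcol with h0 | h1
  · -- color 0 : y = a and x = a'
    have hya : y = a := by
      rcases (hmx y).1 hxy with rfl | rfl | rfl
      · rfl
      · rw [hb1] at h0; exact absurd h0 (by decide)
      · rw [hd2] at h0; exact absurd h0 (by decide)
    have h0' : c y x = 0 := by rw [← hsym]; exact h0
    have hxa' : x = a' := by
      rcases (hmy x).1 hxy.symm with rfl | rfl | rfl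
      · rfl
      · rw [hb1'] at h0'; exact absurd h0' (by decide)
      · rw [hd2'] at h0'; exact absurd h0' (by decide)
    subst hya
    rw [← hxa'] at hy
    rcases hx with ⟨hc1, hs1, -⟩ | ⟨hc1, hs1, -⟩ <;>
      rcases hy with ⟨hc2, hs2, -⟩ | ⟨hc2, hs2, -⟩
    · omega
    · exact Or.inl ⟨hc1, hc2⟩
    · exact Or.inr ⟨hc1, hc2⟩
    · omega
  · -- color 1 : y = b and x = b'
    have hyb : y = b := by
      rcases (hmx y).1 hxy with rfl | rfl | rfl
      · rw [ha0] at h1; exact absurd h1 (by decide)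
      · rfl
      · rw [hd2] at h1; exact absurd h1 (by decide)
    have h1' : c y x = 1 := by rw [← hsym]; exact h1
    have hxb' : x = b' := by
      rcases (hmy x).1 hxy.symm with rfl | rfl | rfl
      · rw [ha0'] at h1'; exact absurd h1' (by decide)
      · rfl
      · rw [hd2'] at h1'; exact absurd h1' (by decide)
    subst hyb
    rw [← hxb'] at hy
    rcases hx with ⟨hc1, -, hs1⟩ | ⟨hc1, -, hs1⟩ <;>
      rcases hy with ⟨hc2, -, hs2⟩ | ⟨hc2, -, hs2⟩
    · omega
    · exact Or.inl ⟨hc1, hc2⟩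
    · exact Or.inr ⟨hc1, hc2⟩
    · omega
end
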